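/- Let X = (V,E) be a digraph and for a positive integer m let N_X(m) denote the number of pairs (f, σ) where f : V → {1,…,m} and σ is an (f,X)-friendly V-listing. Then there exists a polynomial u_X with integer coefficients such that u_X(m) = N_X(m) for every positive integer m. -/

import Mathlib

/-- A listing `l = (σ_1, …, σ_n)` is `(f,X)`-friendly if
`f(σ_1) ≤ f(σ_2) ≤ ⋯ ≤ f(σ_n)` and `f(σ_j) < f(σ_{j+1})` for each `j ∈ [n-1]`
with `(σ_j, σ_{j+1})` an edge of `X`. -/
def Friendly {V : Type*} (E : V → V → Prop) (f : V → ℕ) (l : List V) : Prop :=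
  l.Chain' (fun u v => f u ≤ f v) ∧
  ∀ i : ℕ, ∀ (h1 : 1 ≤ i) (h2 : i ≤ l.length - 1),
    E (l.get ⟨i - 1, by omega⟩) (l.get ⟨i, by omega⟩) →
      f (l.get ⟨i - 1, by omega⟩) < f (l.get ⟨i, by omega⟩)

/-- `N_X(m)`: the number of pairs `(f, σ)` with `f : V → {1, …, m}` a coloring and `σ`
an `(f,X)`-friendly `V`-listing (the value of the Redei-Berge polynomial at `m`). -/
noncomputable def RBCount (V : Type*) [Fintype V] (E : V → V → Prop) (m : ℕ) : ℕ :=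
  Nat.card {p : (V → ℕ) × List V //
    (∀ x, 1 ≤ p.1 x ∧ p.1 x ≤ m) ∧ p.2.Nodup ∧ (∀ x, x ∈ p.2) ∧ Friendly E p.1 p.2}

/-!
A friendly listing for a colouring `f` is sorted by colour, so it lists the colour classes of `f`
in increasing order of colour, each class in an order with no edge between consecutive vertices.
Hence the number of friendly listings of `f` is a product over the colour classes and depends
only on the partition `ker f` of `V` into colour classes. A partition with `k` classes is the
colour-class partition of exactly `m (m - 1) ⋯ (m - k + 1)` colourings `V → {1, …, m}`, so
`N_X(m)` is an integer combination of falling factorials.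
-/

open Finset

theorem List.filter_not_append_filter_of_pairwise {α : Type*} {p : α → Bool} {l : List α}
    (h : l.Pairwise fun a b => p a → p b) : l.filter (fun a => !p a) ++ l.filter p = l := by
  induction l with
  | nil => rfl
  | cons a t ih =>
    obtain ⟨ha, ht⟩ := List.pairwise_cons.mp h
    cases hpa : p a
    · simp [hpa, ih ht]
    · have hall : ∀ b ∈ t, p b := fun b hb => ha b hb hpa
      have hnil : t.filter (fun a => !p a) = [] :=
        List.filter_eq_nil_iff.mpr fun b hb => by simp [hall b hb]
      simp [hpa, hnil, List.filter_eq_self.mpr hall]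

theorem Finset.card_image_append_product {α : Type*} [DecidableEq α] {A B : Finset (List α)}
    {n : ℕ} (hA : ∀ l ∈ A, l.length = n) :
    #((A ×ˢ B).image fun p => p.1 ++ p.2) = #A * #B := by
  rw [card_image_of_injOn, card_product]
  rintro ⟨a, b⟩ hab ⟨a', b'⟩ hab' h
  have hlen : a.length = a'.length := by
    rw [hA a (mem_product.mp hab).1, hA a' (mem_product.mp hab').1]
  obtain ⟨rfl, rfl⟩ := List.append_inj h hlen
  rfl

namespace Setoid

variable {V β : Type*}

instance [Finite V] : Finite (Setoid V) :=
  Finite.of_injective (β := V → V → Prop) (⇑) fun _ _ => eq_iff_rel_eq.mpr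

def kerEqEquivEmbedding (s : Setoid V) : {g : V → β // ker g = s} ≃ (Quotient s ↪ β) where
  toFun g := ⟨Quotient.lift g.1 g.2.ge, (lift_injective_iff_ker_eq_of_le g.2.ge).mpr g.2⟩
  invFun e := ⟨e ∘ Quotient.mk s, Setoid.ext fun _ _ => e.injective.eq_iff.trans Quotient.eq⟩
  left_inv _ := rfl
  right_inv e := by ext ⟨x⟩; rfl

theorem card_ker_eq [Finite V] [Finite β] (s : Setoid V) :
    Nat.card {g : V → β // ker g = s} = (Nat.card β).descFactorial (Nat.card (Quotient s)) := by
  have := Fintype.ofFinite β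
  have := Fintype.ofFinite (Quotient s)
  rw [Nat.card_congr (kerEqEquivEmbedding s), Nat.card_eq_fintype_card,
    Fintype.card_embedding_eq, Nat.card_eq_fintype_card, Nat.card_eq_fintype_card]

theorem sum_ker_eq_sum_descFactorial {M : Type*} [AddCommMonoid M] [Fintype V] [DecidableEq V]
    [Fintype β] [Fintype (Setoid V)] (W : Setoid V → M) :
    ∑ g : V → β, W (ker g) =
      ∑ s : Setoid V, (Fintype.card β).descFactorial (Nat.card (Quotient s)) • W s := by
  classical
  rw [← Fintype.sum_fiberwise' ker W]
  refine Fintype.sum_congr _ _ fun s => ?_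
  rw [sum_const, card_univ, ← Nat.card_eq_fintype_card, card_ker_eq, Nat.card_eq_fintype_card]

end Setoid

namespace RedeiBerge

variable {V α : Type*}

def FriendlyRel [LinearOrder α] (E : V → V → Prop) (f : V → α) (u v : V) : Prop :=
  f u ≤ f v ∧ (E u v → f u < f v)

theorem friendly_iff_isChain {E : V → V → Prop} {f : V → ℕ} {l : List V} :
    Friendly E f l ↔ l.IsChain (FriendlyRel E f) := by
  rw [Friendly, List.Chain', List.isChain_iff_getElem, List.isChain_iff_getElem]
  constructor
  · rintro ⟨hle, hlt⟩ i hi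
    exact ⟨hle i hi, hlt (i + 1) (by omega) (by omega)⟩
  · intro h
    refine ⟨fun i hi => (h i hi).1, fun i h1 h2 hE => ?_⟩
    obtain ⟨j, rfl⟩ := Nat.exists_eq_add_of_le' h1
    exact (h j (by omega)).2 hE

variable [DecidableEq V]

noncomputable def listings (S : Finset V) : Finset (List V) := S.toList.permutations.toFinset

theorem mem_listings {S : Finset V} {l : List V} :
    l ∈ listings S ↔ (l : Multiset V) = S.val := by
  rw [listings, List.mem_toFinset, List.mem_permutations, ← Multiset.coe_eq_coe,
    Finset.coe_toList]

theorem length_eq_card_of_mem_listings {S : Finset V} {l : List V} (h : l ∈ listings S) :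
    l.length = #S := by
  rw [← Multiset.coe_card, mem_listings.mp h, card_val]

theorem mem_of_mem_listings {S : Finset V} {l : List V} {x : V} (h : l ∈ listings S)
    (hx : x ∈ l) : x ∈ S := by
  rwa [← mem_val, ← mem_listings.mp h, Multiset.mem_coe]

theorem filter_mem_listings {S : Finset V} {l : List V} (h : l ∈ listings S) (p : V → Prop)
    [DecidablePred p] : l.filter (fun x => p x) ∈ listings {x ∈ S | p x} := by
  rw [mem_listings, ← Multiset.filter_coe, mem_listings.mp h, filter_val]

theorem mem_listings_univ [Fintype V] {l : List V} :
    l ∈ listings univ ↔ l.Nodup ∧ ∀ x, x ∈ l := by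
  rw [mem_listings]
  refine ⟨fun h => ⟨?_, fun x => ?_⟩, fun ⟨hl, hmem⟩ => ?_⟩
  · rw [← Multiset.coe_nodup, h]; exact univ.nodup
  · rw [← Multiset.mem_coe, h]; exact mem_univ x
  · exact (Multiset.Nodup.ext (Multiset.coe_nodup.mpr hl) univ.nodup).mpr (by simp [hmem])

variable [LinearOrder α] (E : V → V → Prop) [DecidableRel E]

instance (f : V → α) : DecidableRel (FriendlyRel E f) :=
  fun _ _ => inferInstanceAs (Decidable (_ ∧ _))

noncomputable def friendlyListings (f : V → α) (S : Finset V) : Finset (List V) :=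
  {l ∈ listings S | l.IsChain (FriendlyRel E f)}

noncomputable def edgeFreeListings (S : Finset V) : Finset (List V) :=
  {l ∈ listings S | l.IsChain fun u v => ¬ E u v}

/-- A friendly listing is sorted by colour, so it splits at any colour threshold `M`. -/
theorem friendlyListings_eq_image_append (f : V → α) (S : Finset V) (M : α) :
    friendlyListings E f S =
      (friendlyListings E f {x ∈ S | f x < M} ×ˢ friendlyListings E f {x ∈ S | M ≤ f x}).image
        fun p => p.1 ++ p.2 := by
  ext l
  simp only [friendlyListings, mem_image, mem_product, mem_filter, Prod.exists]
  constructor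
  · rintro ⟨hl, hchain⟩
    have hsorted : l.Pairwise fun a b => f a ≤ f b :=
      List.isChain_iff_pairwise.mp (hchain.imp fun _ _ h => h.1)
    have hsplit : l.filter (fun x => f x < M) ++ l.filter (fun x => M ≤ f x) = l := by
      simpa only [← decide_not, not_le] using
        List.filter_not_append_filter_of_pairwise (p := fun x => decide (M ≤ f x))
          (hsorted.imp fun hab hMa => by simpa using (of_decide_eq_true hMa).trans hab)
    rw [← hsplit, List.isChain_append] at hchain
    exact ⟨_, _, ⟨⟨filter_mem_listings hl _, hchain.1⟩, filter_mem_listings hl _, hchain.2.1⟩,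
      hsplit⟩
  · rintro ⟨l₁, l₂, ⟨⟨hl₁, hc₁⟩, hl₂, hc₂⟩, rfl⟩
    refine ⟨?_, List.isChain_append.mpr ⟨hc₁, hc₂, fun x hx y hy => ?_⟩⟩
    · rw [mem_listings] at hl₁ hl₂ ⊢
      rw [← Multiset.coe_add, hl₁, hl₂, filter_val, filter_val]
      simpa only [not_lt] using Multiset.filter_add_not (fun x => f x < M) S.val
    · have hxM := (mem_filter.mp (mem_of_mem_listings hl₁ (List.mem_of_mem_getLast? hx))).2
      have hMy := (mem_filter.mp (mem_of_mem_listings hl₂ (List.mem_of_mem_head? hy))).2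
      exact ⟨(hxM.trans_le hMy).le, fun _ => hxM.trans_le hMy⟩

theorem friendlyListings_eq_edgeFreeListings {f : V → α} {S : Finset V} {c : α}
    (hc : ∀ x ∈ S, f x = c) : friendlyListings E f S = edgeFreeListings E S := by
  ext l
  simp only [friendlyListings, edgeFreeListings, mem_filter, and_congr_right_iff]
  refine fun hl => List.IsChain.iff_of_mem_imp fun a b ha hb => ?_
  simp [FriendlyRel, hc a (mem_of_mem_listings hl ha), hc b (mem_of_mem_listings hl hb)]

theorem card_friendlyListings_eq_prod (f : V → α) (I : Finset α) :
    ∀ S : Finset V, (∀ x ∈ S, f x ∈ I) →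
      #(friendlyListings E f S) = ∏ v ∈ I, #(edgeFreeListings E {x ∈ S | f x = v}) := by
  induction I using Finset.induction_on_max with
  | empty =>
    intro S hS
    obtain rfl : S = ∅ := eq_empty_of_forall_notMem fun x hx => by simpa using hS x hx
    simp [friendlyListings, listings, filter_singleton]
  | insert a I hlt ih =>
    intro S hS
    have hle : ∀ x ∈ S, f x ≤ a := fun x hx => by
      rcases mem_insert.mp (hS x hx) with h | h
      exacts [h.le, (hlt _ h).le]
    have htop : {x ∈ S | a ≤ f x} = {x ∈ S | f x = a} :=
      filter_congr fun x hx => ⟨fun h => le_antisymm (hle x hx) h, fun h => h.ge⟩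
    have hbelow : ∀ x ∈ {x ∈ S | f x < a}, f x ∈ I := fun x hx => by
      obtain ⟨hxS, hxa⟩ := mem_filter.mp hx
      exact (mem_insert.mp (hS x hxS)).resolve_left hxa.ne
    rw [friendlyListings_eq_image_append E f S a,
      card_image_append_product (A := friendlyListings E f {x ∈ S | f x < a})
        fun l hl => length_eq_card_of_mem_listings (mem_filter.mp hl).1,
      ih _ hbelow, friendlyListings_eq_edgeFreeListings E (c := a) (by simp [htop]), htop,
      prod_insert fun h => lt_irrefl a (hlt a h), mul_comm]
    congr 1
    refine prod_congr rfl fun v hv => ?_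
    rw [filter_filter,
      filter_congr fun x _ => and_iff_right_of_imp fun h : f x = v => h ▸ hlt v hv]

variable [Fintype V]

open Classical in
noncomputable def blockWeight (s : Setoid V) : ℕ :=
  ∏ B ∈ (Finpartition.ofSetoid s).parts, #(edgeFreeListings E B)

theorem card_friendlyListings_univ (f : V → α) :
    #(friendlyListings E f univ) = blockWeight E (Setoid.ker f) := by
  classical
  have hparts : (Finpartition.ofSetoid (Setoid.ker f)).parts =
      (univ.image f).image fun v => ({x ∈ univ | f x = v} : Finset V) := by
    ext B
    simp [Finpartition.ofSetoid, Finpartition.ofSetSetoid_parts, eq_comm]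
  rw [card_friendlyListings_eq_prod E f (univ.image f) univ (by simp), blockWeight, hparts,
    prod_image (g := fun v => ({x ∈ univ | f x = v} : Finset V))]
  intro v hv w _ hvw
  obtain ⟨x, -, rfl⟩ := mem_image.mp hv
  simpa using (Finset.ext_iff.mp hvw x).mp (by simp)

theorem RBCount_eq_sum_colorings (m : ℕ) :
    RBCount V E m = ∑ g : V → Icc 1 m, #(friendlyListings E (fun x => (g x : ℕ)) univ) := by
  have hmem : ∀ {f : V → ℕ} {l : List V},
      l ∈ friendlyListings E f univ ↔ l.Nodup ∧ (∀ x, x ∈ l) ∧ Friendly E f l := by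
    simp [friendlyListings, mem_listings_univ, friendly_iff_isChain, and_assoc]
  let e : {p : (V → ℕ) × List V //
      (∀ x, 1 ≤ p.1 x ∧ p.1 x ≤ m) ∧ p.2.Nodup ∧ (∀ x, x ∈ p.2) ∧ Friendly E p.1 p.2} ≃
      (g : V → Icc 1 m) × friendlyListings E (fun x => (g x : ℕ)) univ :=
    { toFun p := ⟨fun x => ⟨p.1.1 x, mem_Icc.mpr (p.2.1 x)⟩, p.1.2, hmem.mpr p.2.2⟩
      invFun q := ⟨(fun x => q.1 x, q.2), fun x => mem_Icc.mp (q.1 x).2, hmem.mp q.2.2⟩ }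
  rw [RBCount, Nat.card_congr e, Nat.card_sigma]
  simp_rw [Nat.card_eq_finsetCard]

theorem RBCount_eq_sum_setoid [Fintype (Setoid V)] (m : ℕ) :
    RBCount V E m =
      ∑ s : Setoid V, m.descFactorial (Nat.card (Quotient s)) * blockWeight E s := by
  have hker : ∀ g : V → Icc 1 m, Setoid.ker (fun x => (g x : ℕ)) = Setoid.ker g :=
    fun g => Setoid.ext fun _ _ => Subtype.ext_iff.symm
  simp_rw [RBCount_eq_sum_colorings, card_friendlyListings_univ, hker]
  rw [Setoid.sum_ker_eq_sum_descFactorial]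
  simp only [Fintype.card_coe, Nat.card_Icc, add_tsub_cancel_right, smul_eq_mul]

end RedeiBerge

theorem RB_polynomial_integer_coeffs {V : Type*} [Fintype V]
    (E : V → V → Prop) :
    ∃ p : Polynomial ℤ, ∀ m : ℕ, 1 ≤ m → p.eval (m : ℤ) = RBCount V E m := by
  classical
  have := Fintype.ofFinite (Setoid V)
  refine ⟨∑ s : Setoid V, Polynomial.C (RedeiBerge.blockWeight E s : ℤ) *
    descPochhammer ℤ (Nat.card (Quotient s)), fun m _ => ?_⟩
  rw [RedeiBerge.RBCount_eq_sum_setoid E m, Polynomial.eval_finsetSum, Nat.cast_sum]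
  refine Fintype.sum_congr _ _ fun s => ?_
  rw [Polynomial.eval_mul, Polynomial.eval_C, descPochhammer_eval_eq_descFactorial, Nat.cast_mul,
    mul_comm]
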